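/- arXiv:1105.1653 — 2 statements merged into one kernel-verified Lean document; each statement's English description precedes it below -/
import Mathlib

section
/- (Lemma 1(iii)) Let α ∈ (0,1], let V be an open set in ℝ^d, and let f, g ∈ C^{0,α}_loc(V). Let K be a compact subset of V, set ε₀ = dist(K, ℝ^d ∖ V)/2 and K₀ = {x ∈ ℝ^d : dist(x,K) ≤ ε₀}. Then there exists a constant C such that for all ε ∈ (0, ε₀): sup_{x ∈ K} |R^ε(f,g)(x)| ≤ C ε^{2α} ‖f‖_{C^{0,α}(K₀)} ‖g‖_{C^{0,α}(K₀)}. -/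
/-! For `x ∈ K` and `ε < ε₀` the points `x - ε z`, `z ∈ supp ρ`, stay in the compact set
`K₀ ⊆ V`, so the increments of `f` and `g` along them are bounded by their Hölder seminorms on
`K₀` times `ε ^ α`. Since `ρ` is a probability density, both `r^ε(f,g)(x)` and
`(f - f^ε)(x) (g - g^ε)(x)` are bounded by the product of these two bounds, whence `C = 2`. -/

open MeasureTheory Set

/-- Mollification `f^ε(x) = ∫ ρ(z) f(x - εz) dz`. -/
noncomputable def mollify {d : ℕ} (ρ : EuclideanSpace ℝ (Fin d) → ℝ) (ε : ℝ)
    (f : EuclideanSpace ℝ (Fin d) → ℝ) (x : EuclideanSpace ℝ (Fin d)) : ℝ :=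
  ∫ z, ρ z * f (x - ε • z)

/-- `r^ε(f,g)(x) = ∫ ρ(z) (f(x-εz) - f(x)) (g(x-εz) - g(x)) dz`. -/
noncomputable def rEps {d : ℕ} (ρ : EuclideanSpace ℝ (Fin d) → ℝ) (ε : ℝ)
    (f g : EuclideanSpace ℝ (Fin d) → ℝ) (x : EuclideanSpace ℝ (Fin d)) : ℝ :=
  ∫ z, ρ z * ((f (x - ε • z) - f x) * (g (x - ε • z) - g x))

/-- `R^ε(f,g) = r^ε(f,g) - (f - f^ε)(g - g^ε)`. -/
noncomputable def REps {d : ℕ} (ρ : EuclideanSpace ℝ (Fin d) → ℝ) (ε : ℝ)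
    (f g : EuclideanSpace ℝ (Fin d) → ℝ) (x : EuclideanSpace ℝ (Fin d)) : ℝ :=
  rEps ρ ε f g x - (f x - mollify ρ ε f x) * (g x - mollify ρ ε g x)

/-- The Hölder norm `‖f‖_{C^{0,α}(S)} = sup_S |f| + sup_{x ≠ y ∈ S} |f x - f y| / ‖x-y‖^α`. -/
noncomputable def holderNorm {d : ℕ} (α : ℝ) (f : EuclideanSpace ℝ (Fin d) → ℝ)
    (S : Set (EuclideanSpace ℝ (Fin d))) : ℝ :=
  sSup ((fun x => |f x|) '' S) +
    sSup {r : ℝ | ∃ x ∈ S, ∃ y ∈ S, x ≠ y ∧ r = |f x - f y| / ‖x - y‖ ^ α}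

/-- `f ∈ C^{0,α}_loc(V)`: the Hölder norm of `f` is finite on every compact subset of `V`. -/
def MemHolderLoc {d : ℕ} (α : ℝ) (f : EuclideanSpace ℝ (Fin d) → ℝ)
    (V : Set (EuclideanSpace ℝ (Fin d))) : Prop :=
  ∀ K : Set (EuclideanSpace ℝ (Fin d)), K ⊆ V → IsCompact K →
    BddAbove ((fun x => |f x|) '' K) ∧
      BddAbove {r : ℝ | ∃ x ∈ K, ∃ y ∈ K, x ≠ y ∧ r = |f x - f y| / ‖x - y‖ ^ α}

open Metric Topology

noncomputable def holderSeminorm {d : ℕ} (α : ℝ) (f : EuclideanSpace ℝ (Fin d) → ℝ)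
    (S : Set (EuclideanSpace ℝ (Fin d))) : ℝ :=
  sSup {r : ℝ | ∃ x ∈ S, ∃ y ∈ S, x ≠ y ∧ r = |f x - f y| / ‖x - y‖ ^ α}

section Holder

variable {d : ℕ} {α : ℝ} {f : EuclideanSpace ℝ (Fin d) → ℝ} {S : Set (EuclideanSpace ℝ (Fin d))}

lemma holderSeminorm_nonneg : 0 ≤ holderSeminorm α f S := by
  refine Real.sSup_nonneg ?_
  rintro r ⟨x, -, y, -, -, rfl⟩
  positivity

lemma holderSeminorm_le_holderNorm : holderSeminorm α f S ≤ holderNorm α f S :=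
  le_add_of_nonneg_left <| Real.sSup_nonneg <| by
    rintro r ⟨x, -, rfl⟩
    exact abs_nonneg _

lemma abs_sub_le_holderSeminorm_mul (hα : 0 < α)
    (hf : BddAbove {r : ℝ | ∃ x ∈ S, ∃ y ∈ S, x ≠ y ∧ r = |f x - f y| / ‖x - y‖ ^ α})
    {p q : EuclideanSpace ℝ (Fin d)} (hp : p ∈ S) (hq : q ∈ S) :
    |f p - f q| ≤ holderSeminorm α f S * ‖p - q‖ ^ α := by
  rcases eq_or_ne p q with rfl | hpq
  · simp [Real.zero_rpow hα.ne']
  · rw [← div_le_iff₀ (by positivity [norm_sub_pos_iff.mpr hpq])]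
    exact le_csSup hf ⟨p, hp, q, hq, hpq, rfl⟩

lemma abs_sub_le_holderSeminorm_mul_of_norm_le (hα : 0 < α)
    (hf : BddAbove {r : ℝ | ∃ x ∈ S, ∃ y ∈ S, x ≠ y ∧ r = |f x - f y| / ‖x - y‖ ^ α})
    {p q : EuclideanSpace ℝ (Fin d)} (hp : p ∈ S) (hq : q ∈ S) {ε : ℝ} (hpq : ‖p - q‖ ≤ ε) :
    |f p - f q| ≤ holderSeminorm α f S * ε ^ α :=
  (abs_sub_le_holderSeminorm_mul hα hf hp hq).trans <| by
    gcongr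
    exact holderSeminorm_nonneg

lemma continuousOn_of_bddAbove_holder (hα : 0 < α)
    (hf : BddAbove {r : ℝ | ∃ x ∈ S, ∃ y ∈ S, x ≠ y ∧ r = |f x - f y| / ‖x - y‖ ^ α}) :
    ContinuousOn f S := by
  intro p hp
  rw [ContinuousWithinAt, tendsto_iff_dist_tendsto_zero]
  have hlim : Filter.Tendsto (fun q => holderSeminorm α f S * ‖q - p‖ ^ α) (𝓝[S] p) (𝓝 0) := by
    have hcont : Continuous fun q : EuclideanSpace ℝ (Fin d) =>
        holderSeminorm α f S * ‖q - p‖ ^ α := by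
      fun_prop (disch := exact hα.le)
    simpa [Real.zero_rpow hα.ne'] using (hcont.tendsto p).mono_left nhdsWithin_le_nhds
  refine squeeze_zero' (.of_forall fun _ => dist_nonneg) ?_ hlim
  filter_upwards [self_mem_nhdsWithin] with q hq
  exact abs_sub_le_holderSeminorm_mul hα hf hq hp

end Holder

section Neighbourhood

variable {X : Type*} [MetricSpace X] {K V : Set X} {δ : ℝ}

lemma setOf_infDist_le_subset (hK : K.Nonempty) (hδ : δ < sInf (Set.image2 dist K Vᶜ)) :
    {y | infDist y K ≤ δ} ⊆ V := by
  intro y hy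
  by_contra hyV
  obtain ⟨p, hp, hpy⟩ := (infDist_lt_iff hK).mp (hy.trans_lt hδ)
  have : sInf (Set.image2 dist K Vᶜ) ≤ dist p y :=
    csInf_le ⟨0, by rintro _ ⟨_, -, _, -, rfl⟩; exact dist_nonneg⟩ ⟨p, hp, y, hyV, rfl⟩
  rw [dist_comm] at hpy
  linarith

lemma IsCompact.isCompact_setOf_infDist_le [ProperSpace X] (hK : IsCompact K) (hne : K.Nonempty)
    (δ : ℝ) : IsCompact {y | infDist y K ≤ δ} := by
  refine (hK.cthickening (r := δ)).of_isClosed_subset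
    (isClosed_le (continuous_infDist_pt K) continuous_const) fun y hy => ?_
  obtain ⟨p, hp, hpy⟩ := hK.exists_infDist_eq_dist hne y
  exact mem_cthickening_of_dist_le y p δ K hp (hpy ▸ hy)

lemma norm_sub_smul_sub_le {E : Type*} [SeminormedAddCommGroup E] [NormedSpace ℝ E] (x : E)
    {z : E} (hz : z ∈ ball 0 1) {ε : ℝ} (hε : 0 ≤ ε) : ‖x - ε • z - x‖ ≤ ε := by
  rw [sub_sub_cancel_left, norm_neg, norm_smul, Real.norm_of_nonneg hε]
  exact mul_le_of_le_one_right hε (mem_ball_zero_iff.mp hz).le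

end Neighbourhood

section Mollifier

lemma abs_integral_mul_le {Ω : Type*} [MeasurableSpace Ω] {μ : Measure Ω} {ρ h : Ω → ℝ} {M : ℝ}
    (hρ_nonneg : ∀ z, 0 ≤ ρ z) (hρ_int : ∫ z, ρ z ∂μ = 1)
    (hM : ∀ z, ρ z ≠ 0 → |h z| ≤ M) : |∫ z, ρ z * h z ∂μ| ≤ M := by
  have hρ : Integrable ρ μ := .of_integral_ne_zero (by simp [hρ_int])
  have hle : ∀ z, ‖ρ z * h z‖ ≤ ρ z * M := by
    intro z
    rcases eq_or_ne (ρ z) 0 with hz | hz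
    · simp [hz]
    · rw [norm_mul, Real.norm_of_nonneg (hρ_nonneg z)]
      exact mul_le_mul_of_nonneg_left (hM z hz) (hρ_nonneg z)
  simpa [integral_mul_const, hρ_int] using
    norm_integral_le_of_norm_le (hρ.mul_const M) (.of_forall hle)

lemma Continuous.integrable_mul_of_continuousOn_tsupport {X : Type*} [TopologicalSpace X]
    [T2Space X] [MeasurableSpace X] [OpensMeasurableSpace X] {μ : Measure X}
    [IsFiniteMeasureOnCompacts μ] {ρ φ : X → ℝ} (hρ : Continuous ρ) (hρK : HasCompactSupport ρ)
    (hφ : ContinuousOn φ (tsupport ρ)) : Integrable (fun z => ρ z * φ z) μ :=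
  (integrableOn_iff_integrable_of_support_subset
    ((Function.support_mul_subset_left _ _).trans (subset_tsupport ρ))).mp
    ((hρ.continuousOn.mul hφ).integrableOn_compact hρK)

variable {d : ℕ} {ρ : EuclideanSpace ℝ (Fin d) → ℝ} {ε : ℝ} {f g : EuclideanSpace ℝ (Fin d) → ℝ}
  {x : EuclideanSpace ℝ (Fin d)}

lemma sub_mollify_eq_integral (hρ_int : ∫ z, ρ z = 1)
    (hf : Integrable fun z => ρ z * f (x - ε • z)) :
    f x - mollify ρ ε f x = ∫ z, ρ z * (f x - f (x - ε • z)) := by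
  have hρ : Integrable ρ := .of_integral_ne_zero (by simp [hρ_int])
  simp_rw [mul_sub, integral_sub (hρ.mul_const _) hf, integral_mul_const, hρ_int, one_mul, mollify]

lemma abs_REps_le {A B : ℝ} (hρ_nonneg : ∀ z, 0 ≤ ρ z) (hρ_int : ∫ z, ρ z = 1)
    (hf : Integrable fun z => ρ z * f (x - ε • z)) (hg : Integrable fun z => ρ z * g (x - ε • z))
    (hA : ∀ z, ρ z ≠ 0 → |f (x - ε • z) - f x| ≤ A)
    (hB : ∀ z, ρ z ≠ 0 → |g (x - ε • z) - g x| ≤ B) :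
    |REps ρ ε f g x| ≤ 2 * (A * B) := by
  have hmf : |f x - mollify ρ ε f x| ≤ A := by
    rw [sub_mollify_eq_integral hρ_int hf]
    exact abs_integral_mul_le hρ_nonneg hρ_int fun z hz => abs_sub_comm (f x) _ ▸ hA z hz
  have hmg : |g x - mollify ρ ε g x| ≤ B := by
    rw [sub_mollify_eq_integral hρ_int hg]
    exact abs_integral_mul_le hρ_nonneg hρ_int fun z hz => abs_sub_comm (g x) _ ▸ hB z hz
  have hr : |rEps ρ ε f g x| ≤ A * B :=
    abs_integral_mul_le hρ_nonneg hρ_int fun z hz => by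
      rw [abs_mul]
      exact mul_le_mul (hA z hz) (hB z hz) (abs_nonneg _) ((abs_nonneg _).trans (hA z hz))
  have hprod : |(f x - mollify ρ ε f x) * (g x - mollify ρ ε g x)| ≤ A * B := by
    rw [abs_mul]
    exact mul_le_mul hmf hmg (abs_nonneg _) ((abs_nonneg _).trans hmf)
  calc |REps ρ ε f g x| ≤ |rEps ρ ε f g x| + |(f x - mollify ρ ε f x) * (g x - mollify ρ ε g x)| :=
        abs_sub _ _
    _ ≤ 2 * (A * B) := by linarith

end Mollifier

theorem stmt6_general (d : ℕ) (α : ℝ) (hα0 : 0 < α)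
    (ρ : EuclideanSpace ℝ (Fin d) → ℝ)
    (hρ_smooth : ContDiff ℝ (⊤ : ℕ∞) ρ) (hρ_nonneg : ∀ x, 0 ≤ ρ x)
    (hρ_supp : tsupport ρ ⊆ Metric.ball 0 1)
    (hρ_int : (∫ x, ρ x) = 1)
    (V : Set (EuclideanSpace ℝ (Fin d)))
    (f g : EuclideanSpace ℝ (Fin d) → ℝ)
    (hf : MemHolderLoc α f V) (hg : MemHolderLoc α g V)
    (K : Set (EuclideanSpace ℝ (Fin d))) (hK : IsCompact K) :
    ∃ C : ℝ, ∀ ε : ℝ, 0 < ε → ε < sInf (Set.image2 dist K Vᶜ) / 2 →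
      ∀ x ∈ K, |REps ρ ε f g x| ≤
        C * ε ^ (2 * α) *
          holderNorm α f {y | Metric.infDist y K ≤ sInf (Set.image2 dist K Vᶜ) / 2} *
          holderNorm α g {y | Metric.infDist y K ≤ sInf (Set.image2 dist K Vᶜ) / 2} := by
  refine ⟨2, fun ε hε hεε₀ x hx => ?_⟩
  set K₀ := {y | infDist y K ≤ sInf (Set.image2 dist K Vᶜ) / 2}
  have hK₀V : K₀ ⊆ V := setOf_infDist_le_subset ⟨x, hx⟩ (by linarith)
  have hK₀ : IsCompact K₀ := hK.isCompact_setOf_infDist_le ⟨x, hx⟩ _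
  have hxK₀ : x ∈ K₀ := (infDist_zero_of_mem hx).trans_le (by linarith)
  have hρK : HasCompactSupport ρ :=
    isCompact_of_isClosed_isBounded (isClosed_tsupport ρ) (isBounded_ball.subset hρ_supp)
  have hshift : ∀ z ∈ tsupport ρ, x - ε • z ∈ K₀ := fun z hz =>
    (infDist_le_dist_of_mem hx).trans <| by
      rw [dist_eq_norm]
      linarith [norm_sub_smul_sub_le x (hρ_supp hz) hε.le]
  have hincrement : ∀ φ : EuclideanSpace ℝ (Fin d) → ℝ, MemHolderLoc α φ V →
      (Integrable fun z => ρ z * φ (x - ε • z)) ∧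
        ∀ z, ρ z ≠ 0 → |φ (x - ε • z) - φ x| ≤ holderSeminorm α φ K₀ * ε ^ α := by
    intro φ hφ
    have hφH := (hφ K₀ hK₀V hK₀).2
    refine ⟨hρ_smooth.continuous.integrable_mul_of_continuousOn_tsupport hρK
      ((continuousOn_of_bddAbove_holder hα0 hφH).comp (by fun_prop) hshift), fun z hz => ?_⟩
    have hz := subset_tsupport ρ hz
    exact abs_sub_le_holderSeminorm_mul_of_norm_le hα0 hφH (hshift z hz) hxK₀
      (norm_sub_smul_sub_le x (hρ_supp hz) hε.le)
  obtain ⟨hfi, hfA⟩ := hincrement f hf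
  obtain ⟨hgi, hgB⟩ := hincrement g hg
  calc |REps ρ ε f g x|
      ≤ 2 * (holderSeminorm α f K₀ * ε ^ α * (holderSeminorm α g K₀ * ε ^ α)) :=
        abs_REps_le hρ_nonneg hρ_int hfi hgi hfA hgB
    _ = 2 * ε ^ (2 * α) * holderSeminorm α f K₀ * holderSeminorm α g K₀ := by
        rw [two_mul α, Real.rpow_add hε]; ring
    _ ≤ 2 * ε ^ (2 * α) * holderNorm α f K₀ * holderNorm α g K₀ := by
        have hε2α : 0 ≤ 2 * ε ^ (2 * α) := by positivity
        exact mul_le_mul (mul_le_mul_of_nonneg_left holderSeminorm_le_holderNorm hε2α)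
          holderSeminorm_le_holderNorm holderSeminorm_nonneg
          (mul_nonneg hε2α (holderSeminorm_nonneg.trans holderSeminorm_le_holderNorm))

/-- Lemma 1(iii): `sup_K |R^ε(f,g)| ≤ C ε^{2α} ‖f‖_{C^{0,α}(K₀)} ‖g‖_{C^{0,α}(K₀)}`
for `0 < ε < ε₀`, where `ε₀ = dist(K, ℝ^d ∖ V)/2` and `K₀` is the closed
`ε₀`-neighbourhood of `K`. -/
theorem stmt6 (d : ℕ) (α : ℝ) (hα0 : 0 < α) (hα1 : α ≤ 1)
    (ρ : EuclideanSpace ℝ (Fin d) → ℝ)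
    (hρ_smooth : ContDiff ℝ (⊤ : ℕ∞) ρ) (hρ_nonneg : ∀ x, 0 ≤ ρ x)
    (hρ_supp : tsupport ρ ⊆ Metric.ball 0 1)
    (hρ_symm : ∀ x, ρ (-x) = ρ x) (hρ_int : (∫ x, ρ x) = 1)
    (V : Set (EuclideanSpace ℝ (Fin d))) (hV : IsOpen V)
    (f g : EuclideanSpace ℝ (Fin d) → ℝ)
    (hf : MemHolderLoc α f V) (hg : MemHolderLoc α g V)
    (K : Set (EuclideanSpace ℝ (Fin d))) (hK : IsCompact K) (hKV : K ⊆ V) :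
    ∃ C : ℝ, ∀ ε : ℝ, 0 < ε → ε < sInf (Set.image2 dist K Vᶜ) / 2 →
      ∀ x ∈ K, |REps ρ ε f g x| ≤
        C * ε ^ (2 * α) *
          holderNorm α f {y | Metric.infDist y K ≤ sInf (Set.image2 dist K Vᶜ) / 2} *
          holderNorm α g {y | Metric.infDist y K ≤ sInf (Set.image2 dist K Vᶜ) / 2} :=
  stmt6_general d α hα0 ρ hρ_smooth hρ_nonneg hρ_supp hρ_int V f g hf hg K hK
end

section
/- Let V be an open set in ℝ^d, ε > 0 such that V^ε = {x ∈ V : dist(x, ℝ^d ∖ V) > ε} is nonempty, and let f, g ∈ L²_loc(V). Then at every point of V^ε the identity (fg)^ε = f^ε g^ε + R^ε(f,g) holds; in particular R^ε(f,g) is a smooth function on V^ε. -/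
open MeasureTheory Set

/-- `V^ε = {x ∈ V : dist(x, ℝ^d ∖ V) > ε}`. -/
def innerSet {d : ℕ} (V : Set (EuclideanSpace ℝ (Fin d))) (ε : ℝ) :
    Set (EuclideanSpace ℝ (Fin d)) :=
  {x ∈ V | ENNReal.ofReal ε < EMetric.infEdist x Vᶜ}

/-! Expanding the square in `r^ε(f,g)` and integrating against `ρ` (of mass one) gives
`r^ε(f,g) = (fg)^ε - f g^ε - g f^ε + fg`, which rearranges to `(fg)^ε = f^ε g^ε + R^ε(f,g)`.
Smoothness of `R^ε(f,g) = (fg)^ε - f^ε g^ε` then reduces to smoothness of mollifications of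
locally integrable functions: near a point of `V^ε`, `h^ε` only sees `h` on a compact ball inside
`V`, so it agrees with the convolution of the compactly supported smooth kernel
`ε^{-d} ρ(·/ε)` with an integrable function. -/

open Metric

lemma Metric.closedBall_subset_of_ofReal_lt_infEDist {α : Type*} [PseudoMetricSpace α]
    {x : α} {s : Set α} {r : ℝ} (hr : 0 ≤ r) (h : ENNReal.ofReal r < infEDist x sᶜ) :
    closedBall x r ⊆ s := by
  rw [← closedEBall_ofReal hr]
  exact (disjoint_closedEBall_of_lt_infEDist h).subset_compl_right.trans (compl_compl s).subset

lemma hasCompactSupport_of_tsupport_subset_closedBall {α β : Type*} [PseudoMetricSpace α]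
    [ProperSpace α] [Zero β] {ρ : α → β} {x : α} {r : ℝ} (hρ : tsupport ρ ⊆ closedBall x r) :
    HasCompactSupport ρ :=
  (isCompact_closedBall x r).of_isClosed_subset (isClosed_tsupport ρ) hρ

lemma sub_smul_mem_closedBall {E : Type*} [SeminormedAddCommGroup E] [NormedSpace ℝ E]
    {x z : E} {ε : ℝ} (hε : 0 ≤ ε) (hz : ‖z‖ ≤ 1) : x - ε • z ∈ closedBall x ε := by
  rw [mem_closedBall, dist_eq_norm, sub_sub_cancel_left, norm_neg, norm_smul,
    Real.norm_of_nonneg hε]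
  exact mul_le_of_le_one_right hε hz

lemma MeasureTheory.MemLp.integrableOn_of_isCompact {α E : Type*} [MeasurableSpace α]
    [TopologicalSpace α] [NormedAddCommGroup E] {μ : Measure α} [IsFiniteMeasureOnCompacts μ]
    {f : α → E} {p : ENNReal} {K : Set α} (hp : 1 ≤ p) (hK : IsCompact K)
    (hf : MemLp f p (μ.restrict K)) : IntegrableOn f K μ :=
  have : IsFiniteMeasure (μ.restrict K) := isFiniteMeasure_restrict.2 hK.measure_lt_top.ne
  hf.integrable hp

section Mollify

variable {d : ℕ}

local notation "𝔼" => EuclideanSpace ℝ (Fin d)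

variable {ρ : EuclideanSpace ℝ (Fin d) → ℝ} {ε : ℝ} {x : EuclideanSpace ℝ (Fin d)}

lemma exists_closedBall_subset_of_mem_innerSet {V : Set 𝔼} (hx : x ∈ innerSet V ε) :
    ∃ r, ε < r ∧ closedBall x r ⊆ V := by
  obtain ⟨r, hr, hεr, hrV⟩ := ENNReal.lt_iff_exists_real_btwn.1 hx.2
  exact ⟨r, (ENNReal.ofReal_lt_ofReal_iff'.1 hεr).1,
    closedBall_subset_of_ofReal_lt_infEDist hr hrV⟩

lemma mul_indicator_comp_sub_smul (hρ_supp : tsupport ρ ⊆ closedBall 0 1) (hε : 0 ≤ ε)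
    {K : Set 𝔼} (hK : closedBall x ε ⊆ K) (h : 𝔼 → ℝ) (z : 𝔼) :
    ρ z * K.indicator h (x - ε • z) = ρ z * h (x - ε • z) := by
  by_cases hz : ρ z = 0
  · simp [hz]
  have hz1 : ‖z‖ ≤ 1 := by simpa using hρ_supp (subset_tsupport ρ hz)
  rw [indicator_of_mem (hK (sub_smul_mem_closedBall hε hz1))]

lemma mollify_indicator_of_closedBall_subset (hρ_supp : tsupport ρ ⊆ closedBall 0 1)
    (hε : 0 ≤ ε) {K : Set 𝔼} (hK : closedBall x ε ⊆ K) (h : 𝔼 → ℝ) :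
    mollify ρ ε (K.indicator h) x = mollify ρ ε h x :=
  integral_congr_ae (.of_forall (mul_indicator_comp_sub_smul hρ_supp hε hK h))

lemma integrable_mul_comp_sub_smul (hρc : Continuous ρ) (hρ_supp : tsupport ρ ⊆ closedBall 0 1)
    (hε : 0 < ε) {h : 𝔼 → ℝ} (hh : IntegrableOn h (closedBall x ε)) :
    Integrable (fun z => ρ z * h (x - ε • z)) := by
  obtain ⟨C, hC⟩ :=
    (hasCompactSupport_of_tsupport_subset_closedBall hρ_supp).exists_bound_of_continuous hρc
  have hind : Integrable (fun z => (closedBall x ε).indicator h (x - ε • z)) :=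
    ((integrable_comp_sub_left _ x).2
      (hh.integrable_indicator isClosed_closedBall.measurableSet)).comp_smul hε.ne'
  refine (hind.bdd_mul hρc.aestronglyMeasurable (.of_forall hC)).congr (.of_forall fun z => ?_)
  exact mul_indicator_comp_sub_smul hρ_supp hε.le subset_rfl h z

lemma rEps_eq_of_integrable {f g : 𝔼 → ℝ} (hρ : Integrable ρ)
    (hf : Integrable (fun z => ρ z * f (x - ε • z)))
    (hg : Integrable (fun z => ρ z * g (x - ε • z)))
    (hfg : Integrable (fun z => ρ z * (f (x - ε • z) * g (x - ε • z)))) :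
    rEps ρ ε f g x = mollify ρ ε (fun y => f y * g y) x - f x * mollify ρ ε g x
      - g x * mollify ρ ε f x + f x * g x * ∫ z, ρ z := by
  have expand : (fun z => ρ z * ((f (x - ε • z) - f x) * (g (x - ε • z) - g x))) =
      fun z => ρ z * (f (x - ε • z) * g (x - ε • z)) - f x * (ρ z * g (x - ε • z))
        - g x * (ρ z * f (x - ε • z)) + f x * g x * ρ z := by
    ext z; ring
  rw [rEps, expand, integral_add, integral_sub, integral_sub, integral_const_mul,
    integral_const_mul, integral_const_mul]
  · rfl
  exacts [hfg, hg.const_mul _, hfg.sub (hg.const_mul _), hf.const_mul _,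
    (hfg.sub (hg.const_mul _)).sub (hf.const_mul _), hρ.const_mul _]

lemma mollify_mul_eq_mul_add_REps (hρc : Continuous ρ) (hρ_supp : tsupport ρ ⊆ closedBall 0 1)
    (hρ_int : ∫ z, ρ z = 1) (hε : 0 < ε) {f g : 𝔼 → ℝ} (hf : IntegrableOn f (closedBall x ε))
    (hg : IntegrableOn g (closedBall x ε))
    (hfg : IntegrableOn (fun y => f y * g y) (closedBall x ε)) :
    mollify ρ ε (fun y => f y * g y) x = mollify ρ ε f x * mollify ρ ε g x + REps ρ ε f g x := by
  have hρ : Integrable ρ :=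
    hρc.integrable_of_hasCompactSupport (hasCompactSupport_of_tsupport_subset_closedBall hρ_supp)
  rw [REps, rEps_eq_of_integrable hρ (integrable_mul_comp_sub_smul hρc hρ_supp hε hf)
    (integrable_mul_comp_sub_smul hρc hρ_supp hε hg)
    (integrable_mul_comp_sub_smul hρc hρ_supp hε hfg), hρ_int]
  ring

noncomputable def scaledKernel (ρ : 𝔼 → ℝ) (ε : ℝ) (t : 𝔼) : ℝ :=
  (ε ^ d)⁻¹ * ρ (ε⁻¹ • t)

lemma mollify_eq_convolution (ρ : 𝔼 → ℝ) (hε : 0 < ε) (h : 𝔼 → ℝ) :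
    mollify ρ ε h = convolution (scaledKernel ρ ε) h (ContinuousLinearMap.lsmul ℝ ℝ) volume := by
  ext x
  have hsub : mollify ρ ε h x = ∫ z, (fun t => ρ (ε⁻¹ • t) * h (x - t)) (ε • z) := by
    simp [mollify, smul_smul, inv_mul_cancel₀ hε.ne']
  rw [hsub, Measure.integral_comp_smul volume (fun t => ρ (ε⁻¹ • t) * h (x - t)),
    finrank_euclideanSpace_fin, abs_of_pos (by positivity), smul_eq_mul, ← integral_const_mul]
  simp only [convolution, scaledKernel, ContinuousLinearMap.lsmul_apply, smul_eq_mul, mul_assoc]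

lemma contDiff_mollify {n : ℕ∞} (hρ : ContDiff ℝ n ρ) (hρc : HasCompactSupport ρ) (hε : 0 < ε)
    {h : 𝔼 → ℝ} (hh : LocallyIntegrable h) : ContDiff ℝ n (mollify ρ ε h) := by
  rw [mollify_eq_convolution ρ hε]
  exact (hρc.comp_smul (inv_ne_zero hε.ne')).mul_left.contDiff_convolution_left _
    (contDiff_const.mul (hρ.comp (contDiff_const_smul _))) hh

lemma contDiffOn_mollify_innerSet {n : ℕ∞} (hρ : ContDiff ℝ n ρ)
    (hρ_supp : tsupport ρ ⊆ closedBall 0 1) (hε : 0 < ε) {V : Set 𝔼} {h : 𝔼 → ℝ}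
    (hh : ∀ K, IsCompact K → K ⊆ V → IntegrableOn h K) :
    ContDiffOn ℝ n (mollify ρ ε h) (innerSet V ε) := by
  intro x₀ hx₀
  obtain ⟨r, hεr, hrV⟩ := exists_closedBall_subset_of_mem_innerSet hx₀
  have hK : Integrable ((closedBall x₀ r).indicator h) :=
    (hh _ (isCompact_closedBall x₀ r) hrV).integrable_indicator isClosed_closedBall.measurableSet
  have hlocal : mollify ρ ε ((closedBall x₀ r).indicator h) =ᶠ[nhds x₀] mollify ρ ε h := by
    filter_upwards [ball_mem_nhds x₀ (sub_pos.2 hεr)] with x hx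
    exact mollify_indicator_of_closedBall_subset hρ_supp hε.le
      (closedBall_subset_closedBall' (by linarith [mem_ball.1 hx])) h
  exact ((contDiff_mollify hρ (hasCompactSupport_of_tsupport_subset_closedBall hρ_supp) hε
    hK.locallyIntegrable).contDiffAt.congr_of_eventuallyEq hlocal.symm).contDiffWithinAt

end Mollify

theorem stmt7_general (d : ℕ)
    (ρ : EuclideanSpace ℝ (Fin d) → ℝ)
    (hρ_smooth : ContDiff ℝ (⊤ : ℕ∞) ρ)
    (hρ_supp : tsupport ρ ⊆ Metric.ball 0 1)
    (hρ_int : (∫ x, ρ x) = 1)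
    (V : Set (EuclideanSpace ℝ (Fin d)))
    (ε : ℝ) (hε : 0 < ε)
    (f g : EuclideanSpace ℝ (Fin d) → ℝ)
    (hf : ∀ K : Set (EuclideanSpace ℝ (Fin d)), IsCompact K → K ⊆ V →
      MemLp f 2 (volume.restrict K))
    (hg : ∀ K : Set (EuclideanSpace ℝ (Fin d)), IsCompact K → K ⊆ V →
      MemLp g 2 (volume.restrict K)) :
    (∀ x ∈ innerSet V ε,
        mollify ρ ε (fun y => f y * g y) x = mollify ρ ε f x * mollify ρ ε g x
          + REps ρ ε f g x) ∧
      ContDiffOn ℝ (⊤ : ℕ∞) (REps ρ ε f g) (innerSet V ε) := by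
  have hρ_supp' := hρ_supp.trans ball_subset_closedBall
  have hfK : ∀ K, IsCompact K → K ⊆ V → IntegrableOn f K :=
    fun K hK hKV => (hf K hK hKV).integrableOn_of_isCompact one_le_two hK
  have hgK : ∀ K, IsCompact K → K ⊆ V → IntegrableOn g K :=
    fun K hK hKV => (hg K hK hKV).integrableOn_of_isCompact one_le_two hK
  have hfgK : ∀ K, IsCompact K → K ⊆ V → IntegrableOn (fun y => f y * g y) K :=
    fun K hK hKV => (hf K hK hKV).integrable_mul (hg K hK hKV)
  have hid : ∀ x ∈ innerSet V ε, mollify ρ ε (fun y => f y * g y) x =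
      mollify ρ ε f x * mollify ρ ε g x + REps ρ ε f g x := by
    intro x hx
    obtain ⟨r, hεr, hrV⟩ := exists_closedBall_subset_of_mem_innerSet hx
    have hB := (closedBall_subset_closedBall hεr.le).trans hrV
    have hBc := isCompact_closedBall x ε
    exact mollify_mul_eq_mul_add_REps hρ_smooth.continuous hρ_supp' hρ_int hε
      (hfK _ hBc hB) (hgK _ hBc hB) (hfgK _ hBc hB)
  refine ⟨hid, ?_⟩
  refine ((contDiffOn_mollify_innerSet hρ_smooth hρ_supp' hε hfgK).sub
    ((contDiffOn_mollify_innerSet hρ_smooth hρ_supp' hε hfK).mul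
      (contDiffOn_mollify_innerSet hρ_smooth hρ_supp' hε hgK))).congr fun x hx => ?_
  rw [hid x hx]
  ring

/-- At every point of `V^ε` one has `(fg)^ε = f^ε g^ε + R^ε(f,g)`; in particular
`R^ε(f,g)` is smooth on `V^ε`. -/
theorem stmt7 (d : ℕ)
    (ρ : EuclideanSpace ℝ (Fin d) → ℝ)
    (hρ_smooth : ContDiff ℝ (⊤ : ℕ∞) ρ) (hρ_nonneg : ∀ x, 0 ≤ ρ x)
    (hρ_supp : tsupport ρ ⊆ Metric.ball 0 1)
    (hρ_symm : ∀ x, ρ (-x) = ρ x) (hρ_int : (∫ x, ρ x) = 1)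
    (V : Set (EuclideanSpace ℝ (Fin d))) (hV : IsOpen V)
    (ε : ℝ) (hε : 0 < ε) (hne : (innerSet V ε).Nonempty)
    (f g : EuclideanSpace ℝ (Fin d) → ℝ)
    (hf : ∀ K : Set (EuclideanSpace ℝ (Fin d)), IsCompact K → K ⊆ V →
      MemLp f 2 (volume.restrict K))
    (hg : ∀ K : Set (EuclideanSpace ℝ (Fin d)), IsCompact K → K ⊆ V →
      MemLp g 2 (volume.restrict K)) :
    (∀ x ∈ innerSet V ε,
        mollify ρ ε (fun y => f y * g y) x = mollify ρ ε f x * mollify ρ ε g x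
          + REps ρ ε f g x) ∧
      ContDiffOn ℝ (⊤ : ℕ∞) (REps ρ ε f g) (innerSet V ε) :=
  stmt7_general d ρ hρ_smooth hρ_supp hρ_int V ε hε f g hf hg
end
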